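/- arXiv:math/0508365 — 3 statements merged into one kernel-verified Lean document; each statement's English description precedes it below -/
import Mathlib

section
/- Let R ∈ SO(3) and U_R ∈ ℝ^{3×3}. Denote by r_p, u_p ∈ ℝ³ (p = 1,2,3) the transposes of the p-th row vectors of R and U_R respectively. Then U_Rᵀ R − Rᵀ U_R = S(M) where M = r₁ × u₁ + r₂ × u₂ + r₃ × u₃ and S is the hat map. In particular, U_Rᵀ R − Rᵀ U_R is skew-symmetric. -/
open Matrix

noncomputable section

/-- The hat map `S : ℝ³ → ℝ^{3×3}`, `S(x) y = x × y`. -/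
def hat (x : Fin 3 → ℝ) : Matrix (Fin 3) (Fin 3) ℝ :=
  !![0, -x 2, x 1; x 2, 0, -x 0; -x 1, x 0, 0]

/-- Cross product on `ℝ³`. -/
def cross (x y : Fin 3 → ℝ) : Fin 3 → ℝ :=
  ![x 1 * y 2 - x 2 * y 1, x 2 * y 0 - x 0 * y 2, x 0 * y 1 - x 1 * y 0]

/-- Euclidean norm on `ℝ³`. -/
def enorm3 (x : Fin 3 → ℝ) : ℝ := Real.sqrt (x 0 ^ 2 + x 1 ^ 2 + x 2 ^ 2)

theorem gravity_gradient_moment (R UR : Matrix (Fin 3) (Fin 3) ℝ)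
    (hR : Rᵀ * R = 1) (hdet : R.det = 1) :
    URᵀ * R - Rᵀ * UR =
      hat (cross (fun j => R 0 j) (fun j => UR 0 j) +
           cross (fun j => R 1 j) (fun j => UR 1 j) +
           cross (fun j => R 2 j) (fun j => UR 2 j)) ∧
    (URᵀ * R - Rᵀ * UR)ᵀ = -(URᵀ * R - Rᵀ * UR) := by
  constructor
  · ext i j
    fin_cases i <;> fin_cases j <;>
      simp [hat, cross, Matrix.mul_apply, Fin.sum_univ_three, Matrix.sub_apply,
        Matrix.transpose_apply, Pi.add_apply] <;> ring
  · ext i j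
    simp [Matrix.mul_apply, Matrix.sub_apply, Matrix.transpose_apply, Matrix.neg_apply, Fin.sum_univ_three]
    ring
end
end

section
/- (Rodrigues' formula) For any nonzero f ∈ ℝ³, exp(S(f)) = I₃ + (sin‖f‖/‖f‖) S(f) + ((1 − cos‖f‖)/‖f‖²) S(f)², and exp(S(f)) ∈ SO(3). -/
/-!
Write `A = S(f)` and `θ = ‖f‖`. Since `A³ = -θ² A`, the odd terms of the exponential series
are `(sin θ / θ) A` times the sine series' terms and the even terms beyond `1` are
`((1 - cos θ) / θ²) A²` times the cosine series' terms. The coefficients `a = sin θ / θ` and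
`b = (1 - cos θ) / θ²` satisfy `a² + θ² b² = 2b`, which is `sin² θ + cos² θ = 1`; by the cubic
relation again this makes `1 - a A + b A² = (1 + a A + b A²)ᵀ` the inverse of
`1 + a A + b A²`, and a direct computation turns it into `det (1 + a A + b A²) = 1`.
-/

open Matrix

noncomputable section

/-- Matrix exponential on `ℝ^{3×3}`. -/
def mexp (A : Matrix (Fin 3) (Fin 3) ℝ) : Matrix (Fin 3) (Fin 3) ℝ :=
  ∑' n : ℕ, ((n.factorial : ℝ)⁻¹) • A ^ n

lemma enorm3_sq (x : Fin 3 → ℝ) : enorm3 x ^ 2 = x 0 ^ 2 + x 1 ^ 2 + x 2 ^ 2 :=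
  Real.sq_sqrt (by positivity)

lemma enorm3_pos {x : Fin 3 → ℝ} (hx : x ≠ 0) : 0 < enorm3 x := by
  obtain ⟨i, hi⟩ := Function.ne_iff.mp hx
  refine Real.sqrt_pos.mpr ?_
  fin_cases i <;> simp only [Pi.zero_apply] at hi <;> positivity

lemma hat_transpose (x : Fin 3 → ℝ) : (hat x)ᵀ = -hat x := by
  ext i j
  fin_cases i <;> fin_cases j <;> simp [hat]

lemma hat_pow_three (x : Fin 3 → ℝ) : hat x ^ 3 = (-enorm3 x ^ 2) • hat x := by
  rw [enorm3_sq]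
  ext i j
  fin_cases i <;> fin_cases j <;>
    simp [hat, pow_succ, Matrix.mul_apply, Fin.sum_univ_three] <;> ring

lemma transpose_one_add_smul_hat_add_smul_hat_sq (x : Fin 3 → ℝ) (a b : ℝ) :
    (1 + a • hat x + b • hat x ^ 2)ᵀ = 1 - a • hat x + b • hat x ^ 2 := by
  simp [transpose_pow, hat_transpose, sub_eq_add_neg]

lemma det_one_add_smul_hat_add_smul_hat_sq (x : Fin 3 → ℝ) {a b : ℝ}
    (hab : a ^ 2 + enorm3 x ^ 2 * b ^ 2 = 2 * b) :
    (1 + a • hat x + b • hat x ^ 2).det = 1 := by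
  rw [enorm3_sq] at hab
  rw [Matrix.det_fin_three]
  simp [hat, sq]
  linear_combination (x 0 ^ 2 + x 1 ^ 2 + x 2 ^ 2) * hab

section CubicRelation

variable {R : Type*} [Ring R] [Algebra ℝ R] {A : R} {θ : ℝ}

lemma pow_odd_of_pow_three_eq_smul (hA : A ^ 3 = (-θ ^ 2) • A) (n : ℕ) :
    A ^ (2 * n + 1) = (-θ ^ 2) ^ n • A := by
  induction n with
  | zero => simp
  | succ n ih =>
    rw [show 2 * (n + 1) + 1 = 2 + (2 * n + 1) by ring, pow_add, ih, mul_smul_comm,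
      ← pow_succ, hA, smul_smul, ← pow_succ]

lemma pow_even_succ_of_pow_three_eq_smul (hA : A ^ 3 = (-θ ^ 2) • A) (n : ℕ) :
    A ^ (2 * (n + 1)) = (-θ ^ 2) ^ n • A ^ 2 := by
  rw [show 2 * (n + 1) = 2 * n + 1 + 1 by ring, pow_succ, pow_odd_of_pow_three_eq_smul hA,
    smul_mul_assoc, ← sq]

lemma hasSum_exp_series_of_pow_three_eq_smul [TopologicalSpace R] [IsTopologicalAddGroup R]
    [ContinuousSMul ℝ R] (hA : A ^ 3 = (-θ ^ 2) • A) (hθ : θ ≠ 0) :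
    HasSum (fun n : ℕ => ((n.factorial : ℝ)⁻¹) • A ^ n)
      (1 + (Real.sin θ / θ) • A + ((1 - Real.cos θ) / θ ^ 2) • A ^ 2) := by
  have neg_sq_pow (n : ℕ) : (-θ ^ 2) ^ n = (-1 : ℝ) ^ n * θ ^ (2 * n) := by
    rw [neg_pow, ← pow_mul]
  rw [add_right_comm]
  refine HasSum.even_add_odd ?_ ?_
  · refine (hasSum_nat_add_iff' 1).mp ?_
    have hcos := (hasSum_nat_add_iff' 1).mpr (Real.hasSum_cos θ)
    convert (hcos.neg.div_const (θ ^ 2)).smul_const (A ^ 2) using 1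
    · rfl
    · funext n
      rw [pow_even_succ_of_pow_three_eq_smul hA, smul_smul, neg_sq_pow]
      congr 1
      field_simp
      ring
    · simp [neg_sub]
  · convert ((Real.hasSum_sin θ).div_const θ).smul_const A using 1
    funext n
    rw [pow_odd_of_pow_three_eq_smul hA, smul_smul, neg_sq_pow]
    congr 1
    field_simp
    ring

lemma one_sub_add_mul_one_add_add_of_pow_three_eq_smul (hA : A ^ 3 = (-θ ^ 2) • A) {a b : ℝ}
    (hab : a ^ 2 + θ ^ 2 * b ^ 2 = 2 * b) :
    (1 - a • A + b • A ^ 2) * (1 + a • A + b • A ^ 2) = 1 := by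
  have hAA : A * A = A ^ 2 := (sq A).symm
  have hA12 : A * A ^ 2 = A ^ 3 := (pow_succ' A 2).symm
  have hA21 : A ^ 2 * A = A ^ 3 := (pow_succ A 2).symm
  have hA22 : A ^ 2 * A ^ 2 = (-θ ^ 2) • A ^ 2 := by
    rw [← pow_add, show 2 + 2 = 1 + 3 by rfl, pow_add, hA, mul_smul_comm, pow_one, hAA]
  simp only [add_mul, sub_mul, mul_add, one_mul, mul_one, smul_mul_smul_comm, hAA, hA12,
    hA21, hA22]
  linear_combination (norm := module) -hab • A ^ 2

end CubicRelation

lemma sin_div_sq_add_sq_mul_one_sub_cos_div_sq {θ : ℝ} (hθ : θ ≠ 0) :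
    (Real.sin θ / θ) ^ 2 + θ ^ 2 * ((1 - Real.cos θ) / θ ^ 2) ^ 2 =
      2 * ((1 - Real.cos θ) / θ ^ 2) := by
  field_simp
  linear_combination Real.sin_sq_add_cos_sq θ

theorem rodrigues_formula (f : Fin 3 → ℝ) (hf : f ≠ 0) :
    mexp (hat f) = 1 + (Real.sin (enorm3 f) / enorm3 f) • hat f +
      ((1 - Real.cos (enorm3 f)) / (enorm3 f) ^ 2) • (hat f * hat f) ∧
    (mexp (hat f))ᵀ * mexp (hat f) = 1 ∧ (mexp (hat f)).det = 1 := by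
  have hθ : enorm3 f ≠ 0 := (enorm3_pos hf).ne'
  have hab := sin_div_sq_add_sq_mul_one_sub_cos_div_sq hθ
  have hexp : mexp (hat f) = 1 + (Real.sin (enorm3 f) / enorm3 f) • hat f +
      ((1 - Real.cos (enorm3 f)) / (enorm3 f) ^ 2) • hat f ^ 2 :=
    (hasSum_exp_series_of_pow_three_eq_smul (hat_pow_three f) hθ).tsum_eq
  rw [hexp, ← sq (hat f), transpose_one_add_smul_hat_add_smul_hat_sq]
  exact ⟨rfl, one_sub_add_mul_one_add_add_of_pow_three_eq_smul (hat_pow_three f) hab,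
    det_one_add_smul_hat_add_smul_hat_sq f hab⟩
end
end

section
/- Suppose Π_k, M_k, M_{k+1} ∈ ℝ³, F_k ∈ SO(3), and symmetric J_d ∈ ℝ^{3×3} satisfy h S(Π_k) = F_k J_d − J_d F_kᵀ − (h²/2) S(M_k) and h S(Π_{k+1}) = F_kᵀ (F_k J_d − J_d F_kᵀ) F_k + (h²/2) S(M_{k+1}). Then Π_{k+1} = F_kᵀ Π_k + (h/2) F_kᵀ M_k + (h/2) M_{k+1}. -/
open Matrix

noncomputable section

lemma hat_conj (F : Matrix (Fin 3) (Fin 3) ℝ) (hF : Fᵀ * F = 1) (hdet : F.det = 1)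
    (x : Fin 3 → ℝ) : Fᵀ * hat x * F = hat (Fᵀ.mulVec x) := by
  have hinv : F⁻¹ = Fᵀ := inv_eq_left_inv hF
  have hadj : adjugate F = Fᵀ := by
    have h := Matrix.inv_def F
    rw [hdet, hinv] at h
    simpa using h.symm
  rw [Matrix.adjugate_fin_three] at hadj
  have e00 := congrFun (congrFun hadj 0) 0
  have e01 := congrFun (congrFun hadj 0) 1
  have e02 := congrFun (congrFun hadj 0) 2
  have e10 := congrFun (congrFun hadj 1) 0
  have e11 := congrFun (congrFun hadj 1) 1
  have e12 := congrFun (congrFun hadj 1) 2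
  have e20 := congrFun (congrFun hadj 2) 0
  have e21 := congrFun (congrFun hadj 2) 1
  have e22 := congrFun (congrFun hadj 2) 2
  simp at e00 e01 e02 e10 e11 e12 e20 e21 e22
  ext i j
  fin_cases i <;> fin_cases j <;>
    simp [hat, Matrix.mul_apply, Matrix.mulVec, dotProduct, Fin.sum_univ_three]
  · ring
  · linear_combination (-(x 0))*e20 + (-(x 1))*e21 + (-(x 2))*e22
  · linear_combination x 0*e10 + x 1*e11 + x 2*e12
  · linear_combination x 0*e20 + x 1*e21 + x 2*e22
  · ring
  · linear_combination (-(x 0))*e00 + (-(x 1))*e01 + (-(x 2))*e02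
  · linear_combination (-(x 0))*e10 + (-(x 1))*e11 + (-(x 2))*e12
  · linear_combination x 0*e00 + x 1*e01 + x 2*e02
  · ring

theorem discrete_angular_momentum_update (h : ℝ) (hh : 0 < h)
    (Pk Pk1 Mk Mk1 : Fin 3 → ℝ) (Fk Jd : Matrix (Fin 3) (Fin 3) ℝ)
    (hF : Fkᵀ * Fk = 1) (hdet : Fk.det = 1) (hJd : Jd = Jdᵀ)
    (h1 : h • hat Pk = Fk * Jd - Jd * Fkᵀ - (h ^ 2 / 2) • hat Mk)
    (h2 : h • hat Pk1 = Fkᵀ * (Fk * Jd - Jd * Fkᵀ) * Fk + (h ^ 2 / 2) • hat Mk1) :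
    Pk1 = Fkᵀ.mulVec Pk + (h / 2) • Fkᵀ.mulVec Mk + (h / 2) • Mk1 := by
  have hX : Fk * Jd - Jd * Fkᵀ = h • hat Pk + (h ^ 2 / 2) • hat Mk := by
    rw [h1]; abel
  have key : h • hat Pk1 = h • hat (Fkᵀ.mulVec Pk) + (h ^ 2 / 2) • hat (Fkᵀ.mulVec Mk)
      + (h ^ 2 / 2) • hat Mk1 := by
    rw [h2, hX, ← hat_conj Fk hF hdet Pk, ← hat_conj Fk hF hdet Mk]
    rw [Matrix.mul_add, Matrix.add_mul, Matrix.mul_smul, Matrix.mul_smul,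
      Matrix.smul_mul, Matrix.smul_mul]
  funext i
  have k0 := congrFun (congrFun key 2) 1
  have k1 := congrFun (congrFun key 0) 2
  have k2 := congrFun (congrFun key 1) 0
  simp [hat, Matrix.add_apply, Matrix.smul_apply] at k0 k1 k2
  fin_cases i
  · show Pk1 0 = (Fkᵀ *ᵥ Pk) 0 + (h / 2) * (Fkᵀ *ᵥ Mk) 0 + (h / 2) * Mk1 0
    exact mul_left_cancel₀ (ne_of_gt hh) (by linear_combination k0)
  · show Pk1 1 = (Fkᵀ *ᵥ Pk) 1 + (h / 2) * (Fkᵀ *ᵥ Mk) 1 + (h / 2) * Mk1 1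
    exact mul_left_cancel₀ (ne_of_gt hh) (by linear_combination k1)
  · show Pk1 2 = (Fkᵀ *ᵥ Pk) 2 + (h / 2) * (Fkᵀ *ᵥ Mk) 2 + (h / 2) * Mk1 2
    exact mul_left_cancel₀ (ne_of_gt hh) (by linear_combination k2)
end
end
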